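/- arXiv:1804.07622 — 2 statements merged into one kernel-verified Lean document; each statement's English description precedes it below -/
import Mathlib

section
/- For a nilpotent Lie algebra L over a field of characteristic 0, two Maurer–Cartan elements related by a gauge transformation exp(x)·ω (with x ∈ L of degree 0 acting by the gauge action) are both solutions of the Maurer–Cartan equation; i.e. the gauge action of the group exp(L⁰) preserves the Maurer–Cartan set {ω ∈ L¹ : dω + ½[ω,ω] = 0}. -/
/-!
Put `ω(t) = exp(t x)·ω = Σ_m a_m t^m`, a polynomial in `t` since `ad_x` is nilpotent, with
`ω(1)` the gauge transform. It solves `ω'(t) = [x, ω(t)] - dx`, so by the Leibniz rule, the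
Jacobi identity and `d² = 0` its curvature `F(t) = dω(t) + ½[ω(t), ω(t)] = Σ_k c_k t^k` solves
`F'(t) = [x, F(t)]`, i.e. `(k + 1) c_{k+1} = [x, c_k]`. As `c_0` is the curvature of `ω`, which
vanishes, all `c_k` vanish in characteristic zero, hence so does `F(1)`.
-/

/-- The (truncated) data of a differential graded Lie algebra over `K`,
with graded pieces `L0, L1, L2, L3` in degrees `0,1,2,3`. -/
structure DGLAData (K L0 L1 L2 L3 : Type*) [Field K] [CharZero K]
    [AddCommGroup L0] [Module K L0] [AddCommGroup L1] [Module K L1]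
    [AddCommGroup L2] [Module K L2] [AddCommGroup L3] [Module K L3] where
  /-- differential in degree 0 -/
  d0 : L0 →ₗ[K] L1
  /-- differential in degree 1 -/
  d1 : L1 →ₗ[K] L2
  /-- differential in degree 2 -/
  d2 : L2 →ₗ[K] L3
  /-- bracket `[·,·] : L0 × L0 → L0` -/
  b00 : L0 →ₗ[K] L0 →ₗ[K] L0
  /-- bracket `[·,·] : L0 × L1 → L1` -/
  b01 : L0 →ₗ[K] L1 →ₗ[K] L1
  /-- bracket `[·,·] : L0 × L2 → L2` -/
  b02 : L0 →ₗ[K] L2 →ₗ[K] L2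
  /-- bracket `[·,·] : L1 × L1 → L2` -/
  b11 : L1 →ₗ[K] L1 →ₗ[K] L2
  /-- bracket `[·,·] : L1 × L2 → L3` -/
  b12 : L1 →ₗ[K] L2 →ₗ[K] L3
  /-- graded antisymmetry in degree (0,0) -/
  antisymm00 : ∀ x y, b00 x y = - b00 y x
  /-- graded antisymmetry in degree (1,1): `[ω,η] = [η,ω]` -/
  symm11 : ∀ ω η, b11 ω η = b11 η ω
  /-- `d² = 0` on `L0` -/
  d_sq0 : ∀ x, d1 (d0 x) = 0
  /-- `d² = 0` on `L1` -/
  d_sq1 : ∀ ω, d2 (d1 ω) = 0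
  /-- Jacobi identity in degrees (0,0,1) -/
  jacobi001 : ∀ x y ω, b01 x (b01 y ω) - b01 y (b01 x ω) = b01 (b00 x y) ω
  /-- Jacobi identity in degrees (0,1,1) -/
  jacobi011 : ∀ x ω η, b02 x (b11 ω η) = b11 (b01 x ω) η + b11 ω (b01 x η)
  /-- Leibniz rule for `d` on `[L0,L0]` -/
  leibniz00 : ∀ x y, d0 (b00 x y) = b01 x (d0 y) - b01 y (d0 x)
  /-- Leibniz rule for `d` on `[L0,L1]` -/
  leibniz01 : ∀ x ω, d1 (b01 x ω) = b11 (d0 x) ω + b02 x (d1 ω)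

namespace DGLAData

variable {K L0 L1 L2 L3 : Type*} [Field K] [CharZero K]
    [AddCommGroup L0] [Module K L0] [AddCommGroup L1] [Module K L1]
    [AddCommGroup L2] [Module K L2] [AddCommGroup L3] [Module K L3]

/-- Maurer–Cartan equation for `ω ∈ L¹`:  `dω + ½[ω,ω] = 0`. -/
def IsMC (D : DGLAData K L0 L1 L2 L3) (ω : L1) : Prop :=
  D.d1 ω + (2 : K)⁻¹ • D.b11 ω ω = 0

/-- The gauge transform `exp(x)·ω = ω + Σ_{n≥0} (ad_x)^n([x,ω] − dx)/(n+1)!`,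
where the sum is finite since `ad_x` is nilpotent (`(ad_x)^N = 0`). -/
def gauge (D : DGLAData K L0 L1 L2 L3) (x : L0) (ω : L1) (N : ℕ) : L1 :=
  ω + ∑ n ∈ Finset.range N,
    (((n + 1).factorial : K))⁻¹ • ((D.b01 x : Module.End K L1) ^ n) (D.b01 x ω - D.d0 x)

end DGLAData

open Finset

section BilinearAntidiagonal

variable {R M N P : Type*} [CommSemiring R] [AddCommMonoid M] [Module R M]
  [AddCommMonoid N] [Module R N] [AddCommMonoid P] [Module R P]

theorem LinearMap.map_sum_range_eq_sum_antidiagonal (B : M →ₗ[R] N →ₗ[R] P)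
    {f : ℕ → M} {g : ℕ → N} {n : ℕ} (hf : ∀ i, n ≤ i → f i = 0)
    (hg : ∀ j, n ≤ j → g j = 0) :
    B (∑ i ∈ Finset.range n, f i) (∑ j ∈ Finset.range n, g j)
      = ∑ k ∈ Finset.range (2 * n), ∑ p ∈ antidiagonal k, B (f p.1) (g p.2) := by
  have hfiber : ∀ k,
      ∑ p ∈ Finset.range n ×ˢ Finset.range n with p.1 + p.2 = k, B (f p.1) (g p.2)
        = ∑ p ∈ antidiagonal k, B (f p.1) (g p.2) := by
    intro k
    refine sum_subset (fun p hp => mem_antidiagonal.2 (mem_filter.1 hp).2) fun p hk hp => ?_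
    have : n ≤ p.1 ∨ n ≤ p.2 := by
      simp only [mem_filter, mem_product, Finset.mem_range, mem_antidiagonal.1 hk, and_true] at hp
      omega
    rcases this with h | h
    · simp [hf _ h]
    · simp [hg _ h]
  rw [← sum_congr rfl fun k _ => hfiber k,
    sum_fiberwise_of_maps_to (g := fun p : ℕ × ℕ => p.1 + p.2) fun p hp => by
      simp only [mem_product, Finset.mem_range] at hp ⊢; omega,
    sum_product]
  simp only [map_sum, LinearMap.sum_apply]
  exact sum_comm

variable (B : M →ₗ[R] M →ₗ[R] N)

theorem LinearMap.sum_antidiagonal_apply_comm (hB : ∀ u v, B u v = B v u) (u v : ℕ → M)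
    (n : ℕ) :
    ∑ p ∈ antidiagonal n, B (u p.1) (v p.2) = ∑ p ∈ antidiagonal n, B (v p.1) (u p.2) := by
  rw [← Nat.sum_antidiagonal_swap]
  exact sum_congr rfl fun p _ => hB _ _

/-- Coefficientwise form of `d/dt B(a(t), a(t)) = 2 B(a'(t), a(t))` for symmetric `B`. -/
theorem LinearMap.succ_nsmul_sum_antidiagonal_succ (hB : ∀ u v, B u v = B v u) (a : ℕ → M)
    (n : ℕ) :
    (n + 1) • ∑ p ∈ antidiagonal (n + 1), B (a p.1) (a p.2)
      = 2 • ∑ p ∈ antidiagonal n, B ((p.1 + 1) • a (p.1 + 1)) (a p.2) := by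
  have hsplit : (n + 1) • ∑ p ∈ antidiagonal (n + 1), B (a p.1) (a p.2)
      = ∑ p ∈ antidiagonal (n + 1), B (p.1 • a p.1) (a p.2)
        + ∑ p ∈ antidiagonal (n + 1), B (a p.1) (p.2 • a p.2) := by
    rw [smul_sum, ← sum_add_distrib]
    refine sum_congr rfl fun p hp => ?_
    rw [map_nsmul, map_nsmul, LinearMap.smul_apply, ← add_smul, mem_antidiagonal.1 hp]
  rw [hsplit, B.sum_antidiagonal_apply_comm hB a (fun i => i • a i), ← two_nsmul,
    Nat.sum_antidiagonal_succ]
  simp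

end BilinearAntidiagonal

namespace DGLAData

variable {K L0 L1 L2 L3 : Type*} [Field K] [CharZero K]
    [AddCommGroup L0] [Module K L0] [AddCommGroup L1] [Module K L1]
    [AddCommGroup L2] [Module K L2] [AddCommGroup L3] [Module K L3]

section Coefficients

variable (D : DGLAData K L0 L1 L2 L3) (x : L0) (ω : L1)

/-- The coefficient `a_m` of `t ^ m` in `exp(t x)·ω`. -/
def gaugeCoeff : ℕ → L1
  | 0 => ω
  | m + 1 =>
    ((m + 1).factorial : K)⁻¹ • ((D.b01 x : Module.End K L1) ^ m) (D.b01 x ω - D.d0 x)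

/-- The coefficient `c_k` of `t ^ k` in the curvature of `exp(t x)·ω`. -/
def curvatureCoeff (k : ℕ) : L2 :=
  D.d1 (D.gaugeCoeff x ω k) +
    (2 : K)⁻¹ • ∑ p ∈ antidiagonal k, D.b11 (D.gaugeCoeff x ω p.1) (D.gaugeCoeff x ω p.2)

theorem gauge_eq_sum_gaugeCoeff (N : ℕ) :
    D.gauge x ω N = ∑ m ∈ range (N + 1), D.gaugeCoeff x ω m := by
  rw [sum_range_succ', gauge, add_comm]
  rfl

theorem gaugeCoeff_eq_zero {N : ℕ} (hnil : (D.b01 x : Module.End K L1) ^ N = 0) {m : ℕ}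
    (hm : N < m) : D.gaugeCoeff x ω m = 0 := by
  obtain ⟨j, rfl⟩ := Nat.exists_eq_add_of_lt hm
  simp [gaugeCoeff, pow_add, hnil]

theorem succ_nsmul_gaugeCoeff_succ (m : ℕ) :
    (m + 1) • D.gaugeCoeff x ω (m + 1)
      = D.b01 x (D.gaugeCoeff x ω m) - if m = 0 then D.d0 x else 0 := by
  rw [← Nat.cast_smul_eq_nsmul K]
  cases m with
  | zero => simp [gaugeCoeff]
  | succ m =>
    have hfac :
        ((m + 2 : ℕ) : K) * ((m + 2).factorial : K)⁻¹ = ((m + 1).factorial : K)⁻¹ := by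
      rw [Nat.factorial_succ, Nat.cast_mul, mul_inv,
        mul_inv_cancel_left₀ (Nat.cast_ne_zero.2 (Nat.succ_ne_zero _))]
    simp only [gaugeCoeff, smul_smul, hfac, Nat.add_eq_zero_iff, one_ne_zero, and_false,
      if_false, sub_zero, map_smul, pow_succ', Module.End.mul_apply]

theorem succ_nsmul_curvatureCoeff_succ (k : ℕ) :
    (k + 1) • D.curvatureCoeff x ω (k + 1) = D.b02 x (D.curvatureCoeff x ω k) := by
  simp only [curvatureCoeff]
  set a := D.gaugeCoeff x ω
  set T := ∑ p ∈ antidiagonal k, D.b11 (D.b01 x (a p.1)) (a p.2)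
  have hhalf : ∀ v : L2, (2 : K)⁻¹ • 2 • v = v := fun v => by
    rw [← Nat.cast_smul_eq_nsmul K, smul_smul]
    norm_num
  have hd : (k + 1) • D.d1 (a (k + 1)) = D.b11 (D.d0 x) (a k) + D.b02 x (D.d1 (a k)) := by
    rw [← map_nsmul, succ_nsmul_gaugeCoeff_succ, map_sub, leibniz01]
    split_ifs <;> simp [d_sq0, a]
  have hconst : ∑ p ∈ antidiagonal k, D.b11 (if p.1 = 0 then D.d0 x else 0) (a p.2)
      = D.b11 (D.d0 x) (a k) := by
    rw [sum_eq_single_of_mem (0, k) (mem_antidiagonal.2 (zero_add k))]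
    · simp
    · rintro ⟨i, j⟩ hij hne
      have hi : i ≠ 0 := by rintro rfl; simp_all
      simp [hi]
  have hsq : (k + 1) • ∑ p ∈ antidiagonal (k + 1), D.b11 (a p.1) (a p.2)
      = 2 • (T - D.b11 (D.d0 x) (a k)) := by
    simp only [D.b11.succ_nsmul_sum_antidiagonal_succ D.symm11, a, succ_nsmul_gaugeCoeff_succ,
      map_sub, LinearMap.sub_apply, sum_sub_distrib, hconst, T]
  have hjacobi : D.b02 x (∑ p ∈ antidiagonal k, D.b11 (a p.1) (a p.2)) = 2 • T := by
    simp only [map_sum, jacobi011, sum_add_distrib]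
    rw [D.b11.sum_antidiagonal_apply_comm D.symm11 a (fun i => D.b01 x (a i)), two_nsmul]
  rw [smul_add, hd, smul_comm, hsq, map_add, map_smul, hjacobi, hhalf, hhalf]
  abel

theorem curvatureCoeff_eq_zero (hω : D.IsMC ω) (k : ℕ) : D.curvatureCoeff x ω k = 0 := by
  induction k with
  | zero => simpa [curvatureCoeff, gaugeCoeff, IsMC] using hω
  | succ k ih =>
    have h := D.succ_nsmul_curvatureCoeff_succ x ω k
    rw [ih, map_zero, ← Nat.cast_smul_eq_nsmul K] at h
    exact (smul_eq_zero.1 h).resolve_left (Nat.cast_ne_zero.2 k.succ_ne_zero)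

end Coefficients

/-- **Gauge invariance of the Maurer–Cartan set**: in a nilpotent DGLA over a
field of characteristic zero, if `ω` satisfies the Maurer–Cartan equation then
so does `exp(x)·ω` for every `x ∈ L⁰`. -/
theorem gauge_isMC (D : DGLAData K L0 L1 L2 L3) (x : L0) (ω : L1) (N : ℕ)
    (hnil : ((D.b01 x : Module.End K L1) ^ N) = 0)
    (hω : D.IsMC ω) : D.IsMC (D.gauge x ω N) := by
  have hvanish : ∀ m, N + 1 ≤ m → D.gaugeCoeff x ω m = 0 := fun m hm =>
    D.gaugeCoeff_eq_zero x ω hnil hm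
  have hdiff : D.d1 (∑ m ∈ range (N + 1), D.gaugeCoeff x ω m)
      = ∑ k ∈ range (2 * (N + 1)), D.d1 (D.gaugeCoeff x ω k) := by
    rw [map_sum]
    exact sum_subset (range_subset_range.2 (by omega)) fun m _ hm => by
      rw [hvanish m (by simpa using hm), map_zero]
  rw [IsMC, gauge_eq_sum_gaugeCoeff, hdiff,
    D.b11.map_sum_range_eq_sum_antidiagonal hvanish hvanish, smul_sum, ← sum_add_distrib]
  exact sum_eq_zero fun k _ => D.curvatureCoeff_eq_zero x ω hω k

end DGLAData
end

section
/- For a line bundle module M over a commutative ring A (i.e. an invertible A-module), the commutator of two differential operators on M of orders ≤ i and ≤ j respectively is a differential operator of order ≤ i + j − 1; hence the order filtration F on Diff_A(M,M) satisfies [F_i, F_j] ⊆ F_{i+j−1} and the associated graded is commutative. -/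
/-!
STATEMENT 10: For an invertible (line-bundle) module `M` over a commutative
ring `A`, the commutator of differential operators of orders `≤ i` and `≤ j`
(in Grothendieck's inductive sense) is a differential operator of order
`≤ i + j − 1`; hence `[F_i, F_j] ⊆ F_{i+j−1}` and the associated graded of
`Diff_A(M,M)` is commutative.
-/

variable {A : Type*} [CommRing A] {M : Type*} [AddCommGroup M] [Module A M]

/-- Multiplication by `a ∈ A` as an additive endomorphism of `M`. -/
def mulOp (A : Type*) [CommRing A] {M : Type*} [AddCommGroup M] [Module A M] (a : A) :
    M →ₗ[ℤ] M where
  toFun m := a • m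
  map_add' := smul_add a
  map_smul' k m := smul_comm a k m

/-- Grothendieck's inductive definition of differential operators:
`θ` has order `≤ 0` iff it is `A`-linear (i.e. `[a, θ] = 0` for all `a`), and
order `≤ k+1` iff `[a, θ] = a∘θ − θ∘a` has order `≤ k` for all `a ∈ A`. -/
def IsDiffOp (A : Type*) [CommRing A] {M : Type*} [AddCommGroup M] [Module A M] :
    ℕ → (M →ₗ[ℤ] M) → Prop
  | 0, θ => ∀ a : A, mulOp A a ∘ₗ θ - θ ∘ₗ mulOp A a = 0
  | k + 1, θ => ∀ a : A, IsDiffOp A k (mulOp A a ∘ₗ θ - θ ∘ₗ mulOp A a)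

/-! ### Auxiliary lemmas -/

@[simp] lemma mulOp_apply (a : A) (m : M) : mulOp A a m = a • m := rfl

lemma isDiffOp_zero_iff (θ : M →ₗ[ℤ] M) :
    IsDiffOp A 0 θ ↔ ∀ a : A, mulOp A a ∘ₗ θ - θ ∘ₗ mulOp A a = 0 := Iff.rfl

lemma isDiffOp_succ_iff (k : ℕ) (θ : M →ₗ[ℤ] M) :
    IsDiffOp A (k + 1) θ ↔ ∀ a : A, IsDiffOp A k (mulOp A a ∘ₗ θ - θ ∘ₗ mulOp A a) := Iff.rfl

/-- The zero operator has any order. -/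
lemma isDiffOp_zeroOp : ∀ k : ℕ, IsDiffOp A k (0 : M →ₗ[ℤ] M) := by
  intro k
  induction k with
  | zero => intro a; simp [isDiffOp_zero_iff]
  | succ k ih => intro a; simpa using ih

/-- Operators of order `≤ k` are closed under addition. -/
lemma isDiffOp_add : ∀ (k : ℕ) (θ φ : M →ₗ[ℤ] M),
    IsDiffOp A k θ → IsDiffOp A k φ → IsDiffOp A k (θ + φ) := by
  intro k
  induction k with
  | zero =>
    intro θ φ hθ hφ a
    have h1 := hθ a; have h2 := hφ a
    ext m
    have e1 := congrArg (fun F : M →ₗ[ℤ] M => F m) h1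
    have e2 := congrArg (fun F : M →ₗ[ℤ] M => F m) h2
    simp only [LinearMap.sub_apply, LinearMap.comp_apply, LinearMap.add_apply,
      mulOp_apply, LinearMap.zero_apply, smul_add, map_add] at e1 e2 ⊢
    linear_combination (norm := abel) e1 + e2
  | succ k ih =>
    intro θ φ hθ hφ a
    have key : mulOp A a ∘ₗ (θ + φ) - (θ + φ) ∘ₗ mulOp A a =
        (mulOp A a ∘ₗ θ - θ ∘ₗ mulOp A a) + (mulOp A a ∘ₗ φ - φ ∘ₗ mulOp A a) := by
      ext m; simp; abel
    rw [key]
    exact ih _ _ (hθ a) (hφ a)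

/-- The Leibniz/Jacobi identity `[a,[θ,φ]] = [[a,θ],φ] + [θ,[a,φ]]`. -/
lemma jacobi (a : A) (θ φ : M →ₗ[ℤ] M) :
    mulOp A a ∘ₗ (θ ∘ₗ φ - φ ∘ₗ θ) - (θ ∘ₗ φ - φ ∘ₗ θ) ∘ₗ mulOp A a =
      ((mulOp A a ∘ₗ θ - θ ∘ₗ mulOp A a) ∘ₗ φ - φ ∘ₗ (mulOp A a ∘ₗ θ - θ ∘ₗ mulOp A a)) +
      (θ ∘ₗ (mulOp A a ∘ₗ φ - φ ∘ₗ mulOp A a) - (mulOp A a ∘ₗ φ - φ ∘ₗ mulOp A a) ∘ₗ θ) := by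
  simp only [← Module.End.mul_eq_comp]
  noncomm_ring

/-- An order-`0` operator, packaged as an `A`-linear map. -/
def toALin (θ : M →ₗ[ℤ] M) (h : IsDiffOp A 0 θ) : M →ₗ[A] M where
  toFun := θ
  map_add' := θ.map_add
  map_smul' a m := by
    have := congrArg (fun F : M →ₗ[ℤ] M => F m) (h a)
    simp only [LinearMap.sub_apply, LinearMap.comp_apply, mulOp_apply,
      LinearMap.zero_apply, sub_eq_zero] at this
    simpa using this.symm

/-- `A`-linear endomorphisms of an invertible module commute. -/
lemma end_comm (N : Type*) [AddCommGroup N] [Module A N]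
    (e : (TensorProduct A M N) ≃ₗ[A] A) (f g : M →ₗ[A] M) :
    f ∘ₗ g = g ∘ₗ f := by
  let δ : (TensorProduct A (TensorProduct A M N) M) ≃ₗ[A] M :=
    (TensorProduct.assoc A M N M) ≪≫ₗ
    (TensorProduct.congr (LinearEquiv.refl A M) (TensorProduct.comm A N M)) ≪≫ₗ
    (TensorProduct.congr (LinearEquiv.refl A M) e) ≪≫ₗ
    (TensorProduct.rid A M)
  have hδ : ∀ h : M →ₗ[A] M,
      δ.toLinearMap ∘ₗ (LinearMap.rTensor M (LinearMap.rTensor N h)) = h ∘ₗ δ.toLinearMap := by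
    intro h
    apply TensorProduct.ext_threefold
    intro m n m'
    simp [δ]
  have hinj : Function.Injective (fun h : M →ₗ[A] M => LinearMap.rTensor N h) := by
    intro h h' hh
    simp only at hh
    have h2 : h ∘ₗ δ.toLinearMap = h' ∘ₗ δ.toLinearMap := by
      rw [← hδ, ← hδ, hh]
    ext m
    have := congrArg (fun F : _ →ₗ[A] M => F (δ.symm m)) h2
    simpa using this
  apply hinj
  have endAA : ∀ (F G : A →ₗ[A] A) (a : A), F (G a) = G (F a) := by
    intro F G a
    have h1 : ∀ (F : A →ₗ[A] A) (b : A), F b = b * F 1 := by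
      intro F b
      conv_lhs => rw [show b = b • (1:A) by simp]
      rw [map_smul, smul_eq_mul]
    rw [h1 F (G a), h1 G a, h1 G (F a), h1 F a]; ring
  have Φeq : ∀ (u : M →ₗ[A] M) (x : TensorProduct A M N),
      LinearMap.rTensor N u x =
        e.symm ((e.toLinearMap ∘ₗ LinearMap.rTensor N u ∘ₗ e.symm.toLinearMap) (e x)) := by
    intro u x; simp
  show LinearMap.rTensor N (f ∘ₗ g) = LinearMap.rTensor N (g ∘ₗ f)
  rw [LinearMap.rTensor_comp, LinearMap.rTensor_comp]
  refine LinearMap.ext fun x => ?_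
  simp only [LinearMap.comp_apply]
  rw [Φeq f (LinearMap.rTensor N g x), Φeq g (LinearMap.rTensor N f x), Φeq g x, Φeq f x]
  simp only [LinearEquiv.apply_symm_apply]
  rw [endAA]

/-- On an invertible module, order-`0` operators commute. -/
lemma comm_of_order_zero (N : Type*) [AddCommGroup N] [Module A N]
    (e : (TensorProduct A M N) ≃ₗ[A] A) (θ φ : M →ₗ[ℤ] M)
    (hθ : IsDiffOp A 0 θ) (hφ : IsDiffOp A 0 φ) :
    θ ∘ₗ φ - φ ∘ₗ θ = 0 := by
  have h := end_comm N e (toALin θ hθ) (toALin φ hφ)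
  ext m
  have := congrArg (fun F : M →ₗ[A] M => F m) h
  simp only [LinearMap.comp_apply] at this
  simp only [LinearMap.sub_apply, LinearMap.comp_apply, LinearMap.zero_apply, sub_eq_zero]
  exact this

/-- The main induction. -/
lemma key_lemma (N : Type*) [AddCommGroup N] [Module A N]
    (e : (TensorProduct A M N) ≃ₗ[A] A) :
    ∀ (n i j : ℕ) (θ φ : M →ₗ[ℤ] M), i + j ≤ n →
      IsDiffOp A i θ → IsDiffOp A j φ →
      IsDiffOp A (i + j - 1) (θ ∘ₗ φ - φ ∘ₗ θ) := by
  intro n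
  induction n with
  | zero =>
    intro i j θ φ hn hθ hφ
    obtain ⟨rfl, rfl⟩ : i = 0 ∧ j = 0 := by omega
    intro a
    rw [jacobi, hθ a, hφ a]
    simp
  | succ n IH =>
    intro i j θ φ hn hθ hφ
    by_cases h2 : i + j ≤ 1
    · -- low-order cases: result has order ≤ 0
      have ht : i + j - 1 = 0 := by omega
      rw [ht]
      intro a
      rw [jacobi]
      rcases Nat.lt_or_ge i 1 with hi | hi
      · -- i = 0
        obtain rfl : i = 0 := by omega
        rw [hθ a]
        simp only [LinearMap.zero_comp, LinearMap.comp_zero, sub_zero, zero_sub, neg_zero,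
          zero_add, sub_self]
        rcases Nat.lt_or_ge j 1 with hj | hj
        · obtain rfl : j = 0 := by omega
          rw [hφ a]
          simp
        · obtain rfl : j = 1 := by omega
          have := comm_of_order_zero N e θ _ hθ (hφ a)
          rw [this]
        -- done
      · -- i = 1, j = 0
        obtain rfl : i = 1 := by omega
        obtain rfl : j = 0 := by omega
        rw [hφ a]
        simp only [LinearMap.zero_comp, LinearMap.comp_zero, sub_zero, zero_sub, neg_zero,
          sub_self, add_zero]
        have := comm_of_order_zero N e _ φ (hθ a) hφ
        rw [this]
    · -- i + j ≥ 2
      obtain ⟨t', ht'⟩ : ∃ t', i + j - 1 = t' + 1 := ⟨i + j - 2, by omega⟩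
      rw [ht']
      intro a
      rw [jacobi]
      apply isDiffOp_add
      · -- [[a,θ],φ]
        rcases Nat.eq_zero_or_pos i with hi | hi
        · subst hi
          rw [hθ a]
          simpa using isDiffOp_zeroOp (A := A) (M := M) t'
        · obtain ⟨i', rfl⟩ : ∃ i', i = i' + 1 := ⟨i - 1, by omega⟩
          have h := IH i' j _ φ (by omega) (hθ a) hφ
          have : i' + j - 1 = t' := by omega
          rwa [this] at h
      · -- [θ,[a,φ]]
        rcases Nat.eq_zero_or_pos j with hj | hj
        · subst hj
          rw [hφ a]
          simpa using isDiffOp_zeroOp (A := A) (M := M) t'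
        · obtain ⟨j', rfl⟩ : ∃ j', j = j' + 1 := ⟨j - 1, by omega⟩
          have h := IH i j' θ _ (by omega) hθ (hφ a)
          have : i + j' - 1 = t' := by omega
          rwa [this] at h

/-- **Commutators drop order by one on a line bundle.**  Let `M` be an
invertible `A`-module (witnessed by `N` with `M ⊗ N ≅ A`).  If `θ` has order
`≤ i` and `φ` has order `≤ j`, then `[θ, φ] = θ∘φ − φ∘θ` has order
`≤ i + j − 1`; i.e. `[F_i, F_j] ⊆ F_{i+j−1}`, so the associated graded of the
order filtration on `Diff_A(M, M)` is commutative. -/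
theorem commutator_isDiffOp_order_sub_one
    (N : Type*) [AddCommGroup N] [Module A N]
    (e : (TensorProduct A M N) ≃ₗ[A] A)
    (i j : ℕ) (θ φ : M →ₗ[ℤ] M)
    (hθ : IsDiffOp A i θ) (hφ : IsDiffOp A j φ) :
    IsDiffOp A (i + j - 1) (θ ∘ₗ φ - φ ∘ₗ θ) := by
  exact key_lemma N e (i + j) i j θ φ le_rfl hθ hφ
end
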